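/- Suppose M : ℕ → (0,∞) satisfies lim_{N→∞} N(ln ln N)²/(M(N)·ln N) = 0, and let L3(β) = 2M(N)·∑_{n=1}^{N} γ_{θ_n}(β), where θ_n = π(2n−1)/(2N) and γ_θ(β) is the unique γ ≥ 0 with cosh(γ) = coth(2β)cosh(2β) − cos θ. Then for each fixed t ≥ 0, lim_{N→∞} [ L3(β_c − t/√(4M(N)N ln N)) − L3(β_c) ] = 4t²/π, where β_c = ln(1+√2)/2. -/

import Mathlib

open Filter Finset

/-- The hyperbolic cotangent. -/
noncomputable def coth (x : ℝ) : ℝ := Real.cosh x / Real.sinh x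

/-- The critical inverse temperature of the two-dimensional Ising model. -/
noncomputable def betac : ℝ := Real.log (1 + Real.sqrt 2) / 2

/-!
Write `g(β) = coth (2β) cosh (2β) - 2 = (sinh 2β - 1)² / sinh 2β`, so that
`cosh γ_θ(β) = (2 - cos θ) + g(β)` and `g(β_c) = 0`; near `β_c`, `g(β_c - δ) ≈ 8δ²`.
The mean value theorem for `cosh` pins `γ_θ(β) - γ_θ(β_c)` between `g / sinh γ_θ(β)` and
`g / sinh γ_θ(β_c)`, and since `sinh² γ_{θ_n}(β_c) ≥ 1/N²` the two differ by a factor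
`1 + O(g N²)`. Summing, `L3(β) - L3(β_c) ≈ 2M · g · ∑ₙ 1 / sinh γ_{θ_n}(β_c)`, where
`1 / sinh γ_θ(β_c) = 1/θ + O(1)` and
`∑ₙ 1/θ_n = (2N/π) ∑ₙ 1/(2n - 1) = N ln N / π + O(N)`.
With `δ² = t² / (4 M N ln N)` this is `2M · 2t²/(M N ln N) · N ln N / π = 4t²/π`, and the
hypothesis on `M` makes `g N² ≈ 2t² N / (M ln N)` tend to `0`.
-/

open Real Topology

lemma two_mul_betac : 2 * betac = arsinh 1 := by
  rw [betac, arsinh, one_pow, one_add_one_eq_two]; ring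

lemma sinh_two_mul_betac : sinh (2 * betac) = 1 := by
  rw [two_mul_betac, sinh_arsinh]

lemma betac_pos : 0 < betac := by
  have : 0 < 2 * betac := by rw [← sinh_pos_iff, sinh_two_mul_betac]; norm_num
  linarith

lemma coth_mul_cosh (x : ℝ) : coth x * cosh x = sinh x + (sinh x)⁻¹ := by
  rcases eq_or_ne (sinh x) 0 with h | h
  · simp [coth, h]
  · rw [coth, div_mul_eq_mul_div, ← sq, cosh_sq]
    field_simp

/-- How far `coth (2β) cosh (2β)` exceeds its value `2` at `β = betac`. -/
noncomputable def couplingGap (β : ℝ) : ℝ := coth (2 * β) * cosh (2 * β) - 2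

lemma couplingGap_eq (β : ℝ) :
    couplingGap β = sinh (2 * β) + (sinh (2 * β))⁻¹ - 2 := by
  rw [couplingGap, coth_mul_cosh]

lemma couplingGap_eq_sq_div {β : ℝ} (hβ : sinh (2 * β) ≠ 0) :
    couplingGap β = (sinh (2 * β) - 1) ^ 2 / sinh (2 * β) := by
  rw [couplingGap_eq]; field_simp; ring

lemma couplingGap_nonneg {β : ℝ} (hβ : 0 < β) : 0 ≤ couplingGap β := by
  have hs : 0 < sinh (2 * β) := sinh_pos_iff.2 (by linarith)
  rw [couplingGap_eq_sq_div hs.ne']; positivity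

lemma hasDerivAt_sinh_two_mul (β : ℝ) :
    HasDerivAt (fun x => sinh (2 * x)) (2 * cosh (2 * β)) β := by
  simpa [mul_comm] using ((hasDerivAt_id' β).const_mul 2).sinh

/-- `couplingGap (betac - δ) = (sinh (2 betac - 2δ) - 1)² / sinh (2 betac - 2δ)`, and the
numerator is `≈ (2 cosh (2 betac) δ)² = 8 δ²`. -/
lemma tendsto_couplingGap_mul {ι : Type*} {l : Filter ι} {δ A : ι → ℝ} {a : ℝ}
    (hδ : Tendsto δ l (𝓝 0)) (hA : Tendsto (fun i => δ i ^ 2 * A i) l (𝓝 a)) :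
    Tendsto (fun i => couplingGap (betac - δ i) * A i) l (𝓝 (8 * a)) := by
  set g : ℝ → ℝ := fun x => sinh (2 * x)
  have hβ : Tendsto (fun i => betac - δ i) l (𝓝 betac) := by
    simpa using (tendsto_const_nhds (x := betac)).sub hδ
  have hslope : Tendsto (fun i => dslope g betac (betac - δ i)) l (𝓝 (2 * sqrt 2)) := by
    have hcont := continuousAt_dslope_same.2 (hasDerivAt_sinh_two_mul betac).differentiableAt
    have hderiv : dslope g betac betac = 2 * sqrt 2 := by
      rw [dslope_same, (hasDerivAt_sinh_two_mul betac).deriv, ← sq_eq_sq₀ (by positivity)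
        (by positivity), mul_pow, cosh_sq, sinh_two_mul_betac, mul_pow, sq_sqrt zero_le_two]
      norm_num
    rw [← hderiv]
    exact hcont.tendsto.comp hβ
  have hs : Tendsto (fun i => g (betac - δ i)) l (𝓝 1) := by
    rw [← sinh_two_mul_betac]
    exact ((continuous_sinh.comp (continuous_const_mul 2)).tendsto betac).comp hβ
  have hlim := (hA.mul (hslope.pow 2)).mul (hs.inv₀ one_ne_zero)
  rw [mul_pow, sq_sqrt zero_le_two, inv_one, mul_one, show a * (2 ^ 2 * 2) = 8 * a by ring]
    at hlim
  refine hlim.congr' ?_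
  filter_upwards [hs.eventually_ne one_ne_zero] with i hi
  have hsub : g (betac - δ i) - 1 = -δ i * dslope g betac (betac - δ i) := by
    rw [← sinh_two_mul_betac, ← sub_smul_dslope g betac, smul_eq_mul]; ring_nf
  rw [couplingGap_eq_sq_div hi]
  change _ = (g (betac - δ i) - 1) ^ 2 / g (betac - δ i) * A i
  rw [hsub]; field_simp

lemma cosh_sub_cosh_mem_Icc {a b : ℝ} (hab : a ≤ b) :
    cosh b - cosh a ∈ Set.Icc (sinh a * (b - a)) (sinh b * (b - a)) := by
  have hD : Convex ℝ (Set.Icc a b) := convex_Icc a b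
  have hcont := continuous_cosh.continuousOn (s := Set.Icc a b)
  have hdiff := differentiable_cosh.differentiableOn (s := interior (Set.Icc a b))
  constructor
  · refine hD.mul_sub_le_image_sub_of_le_deriv hcont hdiff (fun x hx => ?_)
      a (Set.left_mem_Icc.2 hab) b (Set.right_mem_Icc.2 hab) hab
    rw [interior_Icc] at hx
    rw [Real.deriv_cosh]; exact sinh_le_sinh.2 hx.1.le
  · refine hD.image_sub_le_mul_sub_of_deriv_le hcont hdiff (fun x hx => ?_)
      a (Set.left_mem_Icc.2 hab) b (Set.right_mem_Icc.2 hab) hab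
    rw [interior_Icc] at hx
    rw [Real.deriv_cosh]; exact sinh_le_sinh.2 hx.2.le

lemma sinh_eq_sqrt_cosh_sq_sub_one {x : ℝ} (hx : 0 ≤ x) : sinh x = √(cosh x ^ 2 - 1) := by
  rw [← sinh_sq, sqrt_sq (sinh_nonneg_iff.2 hx)]

/-- Mean value bounds for `arcosh (c + e) - arcosh c`, phrased through `cosh`. -/
lemma div_sqrt_le_sub_le_div_sqrt {x y c e : ℝ} (hx : 0 ≤ x) (hy : 0 ≤ y) (hc : 1 < c)
    (he : 0 ≤ e) (hcx : cosh x = c) (hcy : cosh y = c + e) :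
    e / √((c + e) ^ 2 - 1) ≤ y - x ∧ y - x ≤ e / √(c ^ 2 - 1) := by
  have hxy : x ≤ y := by
    rw [← abs_of_nonneg hx, ← abs_of_nonneg hy, ← cosh_le_cosh, hcx, hcy]; linarith
  have hsx : 0 < sinh x := sinh_pos_iff.2 (lt_of_le_of_ne hx
    (by rintro rfl; rw [cosh_zero] at hcx; linarith))
  have hsy : 0 < sinh y := hsx.trans_le (sinh_le_sinh.2 hxy)
  obtain ⟨hlo, hhi⟩ := cosh_sub_cosh_mem_Icc hxy
  rw [hcx, hcy, add_sub_cancel_left] at hlo hhi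
  rw [← hcy, ← hcx, ← sinh_eq_sqrt_cosh_sq_sub_one hx, ← sinh_eq_sqrt_cosh_sq_sub_one hy,
    div_le_iff₀ hsy, le_div_iff₀ hsx]
  constructor <;> linarith

/-- `critWeight θ = 1 / sinh (γ betac θ)`: at criticality `cosh (γ betac θ) = 2 - cos θ`. -/
noncomputable def critWeight (θ : ℝ) : ℝ := (√((2 - cos θ) ^ 2 - 1))⁻¹

lemma two_sub_cos_sq_sub_one (θ : ℝ) :
    (2 - cos θ) ^ 2 - 1 = (2 * sin (θ / 2)) ^ 2 * (1 + sin (θ / 2) ^ 2) := by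
  have h := cos_two_mul' (θ / 2)
  rw [mul_div_cancel₀ _ two_ne_zero, cos_sq'] at h
  rw [h]; ring

/-- With `s = sin (θ/2)`, `critWeight θ = 1 / (2s √(1 + s²))`; the error is bounded because
`θ - 2s = O(θ³)` and `√(1 + s²) - 1 = O(θ²)`. -/
lemma abs_critWeight_sub_inv_le_one {θ : ℝ} (h0 : 0 < θ) (hπ : θ ≤ π) :
    |critWeight θ - θ⁻¹| ≤ 1 := by
  set s := sin (θ / 2)
  have hs_lo : θ / π ≤ s := by
    have := mul_le_sin (x := θ / 2) (by linarith) (by linarith)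
    rwa [div_mul_div_comm, mul_comm π, mul_div_mul_left _ _ two_ne_zero] at this
  have hs_hi : s ≤ θ / 2 := sin_le (by linarith)
  have hs_cube : θ / 2 - (θ / 2) ^ 3 / 6 ≤ s := sin_ge_sub_cube (by linarith)
  have hs : θ / 4 ≤ s := le_trans (div_le_div_of_nonneg_left h0.le pi_pos pi_le_four) hs_lo
  set r := √(1 + s ^ 2)
  have hr_lo : 1 ≤ r := one_le_sqrt.2 (by nlinarith)
  have hr_hi : r ≤ 1 + s ^ 2 / 2 := sqrt_le_iff.2 ⟨by positivity, by nlinarith⟩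
  have hw : critWeight θ = (2 * s * r)⁻¹ := by
    rw [critWeight, two_sub_cos_sq_sub_one, sqrt_mul (sq_nonneg _), sqrt_sq (by linarith)]
  have hs_pos : 0 < s := by linarith
  rw [hw, abs_le]
  constructor
  · have key : 2 * s * r - θ ≤ 2 * s * r * θ := by
      have h1 : 2 * s * r ≤ 2 * s + s ^ 3 := by
        nlinarith [mul_le_mul_of_nonneg_left hr_hi (by positivity : 0 ≤ 2 * s)]
      have h2 : 2 * s * θ ≤ 2 * s * r * θ := by
        nlinarith [mul_le_mul_of_nonneg_right hr_lo (by positivity : 0 ≤ 2 * s * θ)]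
      have h3 : s ^ 3 ≤ 2 * s * θ := by
        have : s ^ 2 ≤ 2 * θ := by nlinarith [sin_le_one (θ / 2)]
        nlinarith [mul_le_mul_of_nonneg_left this hs_pos.le]
      linarith
    have : θ⁻¹ - (2 * s * r)⁻¹ = (2 * s * r - θ) / (2 * s * r * θ) := by field_simp
    linarith [(div_le_one (by positivity)).2 key]
  · have key : θ - 2 * s ≤ 2 * s * θ := by
      have h1 : θ ^ 3 ≤ 12 * θ ^ 2 := by nlinarith [pi_le_four, mul_pos h0 h0]
      nlinarith
    have : (2 * s)⁻¹ - θ⁻¹ = (θ - 2 * s) / (2 * s * θ) := by field_simp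
    have hr : (2 * s * r)⁻¹ ≤ (2 * s)⁻¹ :=
      inv_anti₀ (by positivity) (le_mul_of_one_le_right (by positivity) hr_lo)
    linarith [(div_le_one (by positivity)).2 key]

lemma log_add_two_sub_log_le {x : ℝ} (hx : 0 < x) : log (x + 2) - log x ≤ 2 / x := by
  have h := log_le_sub_one_of_pos (show 0 < (x + 2) / x by positivity)
  rw [log_div (by positivity) hx.ne'] at h
  convert h using 1; field_simp; ring

lemma two_div_le_log_sub_log_sub_two {x : ℝ} (hx : 2 < x) : 2 / x ≤ log x - log (x - 2) := by
  have h := one_sub_inv_le_log_of_pos (show 0 < x / (x - 2) by apply div_pos <;> linarith)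
  rw [log_div (by positivity) (by linarith)] at h
  convert h using 1; field_simp; ring

lemma sum_inv_two_mul_sub_one_mem_Icc {N : ℕ} (hN : 1 ≤ N) :
    ∑ n ∈ Icc 1 N, (2 * (n : ℝ) - 1)⁻¹ ∈
      Set.Icc (log (2 * N + 1) / 2) (1 + log (2 * N - 1) / 2) := by
  induction N, hN using Nat.le_induction with
  | base =>
    have := log_le_sub_one_of_pos (by norm_num : (0 : ℝ) < 3)
    norm_num; linarith
  | succ N hN ih =>
    have hN' : (1 : ℝ) ≤ N := by exact_mod_cast hN
    rw [sum_Icc_succ_top (by omega)]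
    push_cast
    have hlo := log_add_two_sub_log_le (show 0 < 2 * (N : ℝ) + 1 by linarith)
    have hhi := two_div_le_log_sub_log_sub_two (show 2 < 2 * (N : ℝ) + 1 by linarith)
    rw [show 2 * ((N : ℝ) + 1) - 1 = 2 * N + 1 by ring,
      show 2 * ((N : ℝ) + 1) + 1 = 2 * N + 1 + 2 by ring]
    rw [show 2 * (N : ℝ) + 1 - 2 = 2 * N - 1 by ring] at hhi
    rw [div_eq_mul_inv] at hlo hhi
    constructor <;> linarith [ih.1, ih.2]

noncomputable def latticeAngle (N n : ℕ) : ℝ := π * (2 * (n : ℝ) - 1) / (2 * N)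

lemma latticeAngle_mem_Ioc {N n : ℕ} (hn : n ∈ Icc 1 N) :
    latticeAngle N n ∈ Set.Ioc 0 π := by
  obtain ⟨hn1, hnN⟩ := mem_Icc.1 hn
  have h1 : (1 : ℝ) ≤ n := by exact_mod_cast hn1
  have h2 : (n : ℝ) ≤ N := by exact_mod_cast hnN
  refine ⟨div_pos (mul_pos pi_pos (by linarith)) (by linarith), ?_⟩
  rw [latticeAngle, div_le_iff₀ (by linarith)]
  nlinarith [pi_pos]

lemma pi_div_le_latticeAngle {N n : ℕ} (hn : n ∈ Icc 1 N) :
    π / (2 * N) ≤ latticeAngle N n := by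
  have h1 : (1 : ℝ) ≤ n := by exact_mod_cast (mem_Icc.1 hn).1
  exact div_le_div_of_nonneg_right (le_mul_of_one_le_right pi_pos.le (by linarith)) (by positivity)

lemma one_le_sq_mul_two_sub_cos_latticeAngle {N n : ℕ} (hn : n ∈ Icc 1 N) :
    1 ≤ (N : ℝ) ^ 2 * ((2 - cos (latticeAngle N n)) ^ 2 - 1) := by
  obtain ⟨h0, hπ⟩ := latticeAngle_mem_Ioc hn
  set θ := latticeAngle N n
  have hcos : cos θ ≤ 1 - 2 / π ^ 2 * θ ^ 2 :=
    cos_le_one_sub_mul_cos_sq (by rw [abs_of_pos h0]; exact hπ)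
  have hN : (1 : ℝ) ≤ N := by exact_mod_cast (mem_Icc.1 hn).1.trans (mem_Icc.1 hn).2
  have hθ : π ≤ 2 * N * θ := by
    have := pi_div_le_latticeAngle hn
    rwa [div_le_iff₀ (by positivity), mul_comm] at this
  have hsq : 2 * (2 / π ^ 2 * θ ^ 2) ≤ (2 - cos θ) ^ 2 - 1 := by
    have h1 : 2 / π ^ 2 * θ ^ 2 ≤ 1 - cos θ := by linarith
    have h2 : 2 ≤ 3 - cos θ := by linarith [cos_le_one θ]
    nlinarith [mul_le_mul h1 h2 zero_le_two (by linarith)]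
  refine le_trans ?_ (mul_le_mul_of_nonneg_left hsq (by positivity))
  rw [show (N : ℝ) ^ 2 * (2 * (2 / π ^ 2 * θ ^ 2)) = (2 * N * θ) ^ 2 / π ^ 2 by field_simp,
    le_div_iff₀ (by positivity), one_mul]
  exact pow_le_pow_left₀ pi_pos.le hθ 2

noncomputable def critWeightSum (N : ℕ) : ℝ := ∑ n ∈ Icc 1 N, critWeight (latticeAngle N n)

lemma sum_inv_latticeAngle (N : ℕ) :
    ∑ n ∈ Icc 1 N, (latticeAngle N n)⁻¹
      = 2 * N / π * ∑ n ∈ Icc 1 N, (2 * (n : ℝ) - 1)⁻¹ := by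
  rw [mul_sum]
  refine sum_congr rfl fun n _ => ?_
  rw [latticeAngle, inv_div, div_mul_eq_div_div, div_eq_mul_inv]

lemma abs_critWeightSum_sub_le {N : ℕ} (hN : 1 ≤ N) :
    |critWeightSum N - N * log N / π| ≤ 2 * N := by
  have hN' : (1 : ℝ) ≤ N := by exact_mod_cast hN
  have hweight : |critWeightSum N - ∑ n ∈ Icc 1 N, (latticeAngle N n)⁻¹| ≤ N := by
    rw [critWeightSum, ← sum_sub_distrib]
    refine (abs_sum_le_sum_abs _ _).trans ((sum_le_card_nsmul _ _ 1 fun n hn => ?_).trans ?_)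
    · obtain ⟨h0, hπ⟩ := latticeAngle_mem_Ioc hn
      exact abs_critWeight_sub_inv_le_one h0 hπ
    · simp
  have hharm : |∑ n ∈ Icc 1 N, (latticeAngle N n)⁻¹ - N * log N / π| ≤ N := by
    obtain ⟨hlo, hhi⟩ := sum_inv_two_mul_sub_one_mem_Icc hN
    have h1 : log N ≤ log (2 * N + 1) := log_le_log (by positivity) (by linarith)
    have h2 : log (2 * N - 1) ≤ log 2 + log N := by
      rw [← log_mul two_ne_zero (by positivity)]; exact log_le_log (by linarith) (by linarith)
    have h3 : log 2 ≤ 1 := (log_le_sub_one_of_pos two_pos).trans (by norm_num)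
    have h4 : 3 * (N : ℝ) / π ≤ N := by
      rw [div_le_iff₀ pi_pos]; nlinarith [pi_gt_three]
    rw [sum_inv_latticeAngle, show N * log N / π = 2 * N / π * (log N / 2) by ring, ← mul_sub,
      abs_mul, abs_of_pos (by positivity)]
    calc 2 * N / π * |∑ n ∈ Icc 1 N, (2 * (n : ℝ) - 1)⁻¹ - log N / 2|
        ≤ 2 * N / π * (3 / 2) := by
          gcongr
          rw [abs_le]; constructor <;> linarith [hlo, hhi]
      _ = 3 * N / π := by ring
      _ ≤ N := h4
  calc |critWeightSum N - N * log N / π|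
      ≤ |critWeightSum N - ∑ n ∈ Icc 1 N, (latticeAngle N n)⁻¹|
        + |∑ n ∈ Icc 1 N, (latticeAngle N n)⁻¹ - N * log N / π| := abs_sub_le _ _ _
    _ ≤ 2 * N := by linarith

lemma tendsto_critWeightSum_div :
    Tendsto (fun N : ℕ => critWeightSum N / (N * log N)) atTop (𝓝 π⁻¹) := by
  have hlog : Tendsto (fun N : ℕ => log N) atTop atTop :=
    tendsto_log_atTop.comp tendsto_natCast_atTop_atTop
  rw [← tendsto_sub_nhds_zero_iff]
  refine squeeze_zero_norm' ?_ ((tendsto_const_nhds (x := (2 : ℝ))).div_atTop hlog)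
  filter_upwards [hlog.eventually_gt_atTop 0, eventually_ge_atTop 1] with N hlogN hN
  have hN' : (0 : ℝ) < N := by exact_mod_cast hN
  rw [norm_eq_abs, show critWeightSum N / (N * log N) - π⁻¹
      = (critWeightSum N - N * log N / π) / (N * log N) by field_simp,
    abs_div, abs_of_pos (show (0 : ℝ) < N * log N by positivity),
    div_le_div_iff₀ (by positivity) hlogN]
  linarith [mul_le_mul_of_nonneg_right (abs_critWeightSum_sub_le hN) hlogN.le]

/-- `γ β θ` is Onsager's `γ_θ(β)`, constrained only for `β > 0` and `θ ∈ (0, π]`. -/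
def IsOnsagerGamma (γ : ℝ → ℝ → ℝ) : Prop :=
  ∀ β > (0 : ℝ), ∀ θ ∈ Set.Ioc 0 π,
    0 ≤ γ β θ ∧ cosh (γ β θ) = coth (2 * β) * cosh (2 * β) - cos θ

lemma sqrt_add_sq_sub_one_le {c e K : ℝ} (hc : 1 < c) (hc3 : c ≤ 3) (he : 0 ≤ e)
    (hK : 1 ≤ K * (c ^ 2 - 1)) :
    √((c + e) ^ 2 - 1) ≤ √(1 + e * (6 + e) * K) * √(c ^ 2 - 1) := by
  have hK0 : 0 ≤ K := by
    by_contra! h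
    nlinarith [mul_neg_of_neg_of_pos h (show 0 < c ^ 2 - 1 by nlinarith)]
  rw [← sqrt_mul (by positivity)]
  apply sqrt_le_sqrt
  have h : e * (6 + e) * 1 ≤ e * (6 + e) * (K * (c ^ 2 - 1)) :=
    mul_le_mul_of_nonneg_left hK (by positivity)
  nlinarith

namespace IsOnsagerGamma

variable {γ : ℝ → ℝ → ℝ}

lemma sub_betac_mem_Icc (hγ : IsOnsagerGamma γ) {β θ K : ℝ} (hβ : 0 < β)
    (hθ : θ ∈ Set.Ioc 0 π) (hK : 1 ≤ K * ((2 - cos θ) ^ 2 - 1)) :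
    γ β θ - γ betac θ ∈ Set.Icc
      (couplingGap β * critWeight θ / √(1 + couplingGap β * (6 + couplingGap β) * K))
      (couplingGap β * critWeight θ) := by
  obtain ⟨hγβ_nonneg, hγβ⟩ := hγ β hβ θ hθ
  obtain ⟨hγc_nonneg, hγc⟩ := hγ betac betac_pos θ hθ
  rw [coth_mul_cosh, sinh_two_mul_betac, inv_one, show (1 : ℝ) + 1 = 2 by norm_num] at hγc
  rw [show coth (2 * β) * cosh (2 * β) = 2 + couplingGap β by rw [couplingGap]; ring,
    add_sub_right_comm] at hγβ
  have he := couplingGap_nonneg hβ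
  set e := couplingGap β
  set c := 2 - cos θ
  have hc : 1 < c := by
    have := cos_lt_cos_of_nonneg_of_le_pi le_rfl hθ.2 hθ.1
    rw [cos_zero] at this; linarith
  have hc3 : c ≤ 3 := by linarith [neg_one_le_cos θ]
  obtain ⟨hlo, hhi⟩ := div_sqrt_le_sub_le_div_sqrt hγc_nonneg hγβ_nonneg hc he hγc hγβ
  rw [critWeight, ← div_eq_mul_inv]
  refine ⟨le_trans ?_ hlo, hhi⟩
  rw [div_div, mul_comm (√_)]
  exact div_le_div_of_nonneg_left he (sqrt_pos.2 (by nlinarith))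
    (sqrt_add_sq_sub_one_le hc hc3 he hK)

lemma sum_sub_betac_mem_Icc (hγ : IsOnsagerGamma γ) {β : ℝ} (hβ : 0 < β) (N : ℕ) :
    ∑ n ∈ Icc 1 N, (γ β (latticeAngle N n) - γ betac (latticeAngle N n)) ∈ Set.Icc
      (couplingGap β * critWeightSum N / √(1 + couplingGap β * (6 + couplingGap β) * N ^ 2))
      (couplingGap β * critWeightSum N) := by
  rw [critWeightSum, mul_sum, sum_div]
  have h n (hn : n ∈ Icc 1 N) := hγ.sub_betac_mem_Icc hβ (latticeAngle_mem_Ioc hn)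
    (one_le_sq_mul_two_sub_cos_latticeAngle hn)
  exact ⟨sum_le_sum fun n hn => (h n hn).1, sum_le_sum fun n hn => (h n hn).2⟩

end IsOnsagerGamma

section Asymptotics

variable {M : ℕ → ℝ}

lemma tendsto_div_mul_log_of_tendsto_loglog (hMpos : ∀ N, 0 < M N)
    (hM : Tendsto (fun N : ℕ => (N : ℝ) * log (log N) ^ 2 / (M N * log N)) atTop (𝓝 0)) :
    Tendsto (fun N : ℕ => (N : ℝ) / (M N * log N)) atTop (𝓝 0) := by
  have hlog : Tendsto (fun N : ℕ => log N) atTop atTop :=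
    tendsto_log_atTop.comp tendsto_natCast_atTop_atTop
  refine tendsto_of_tendsto_of_tendsto_of_le_of_le' tendsto_const_nhds hM ?_ ?_
  all_goals filter_upwards [hlog.eventually_gt_atTop 0,
    (tendsto_log_atTop.comp hlog).eventually_ge_atTop 1] with N hlogN hloglogN
  · have := hMpos N; positivity
  · have := hMpos N
    rw [mul_div_right_comm]
    exact le_mul_of_one_le_right (by positivity) (one_le_pow₀ hloglogN)

lemma tendsto_mul_mul_log_atTop (hMpos : ∀ N, 0 < M N)
    (hratio : Tendsto (fun N : ℕ => (N : ℝ) / (M N * log N)) atTop (𝓝 0)) :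
    Tendsto (fun N : ℕ => M N * N * log N) atTop atTop := by
  have hlog : Tendsto (fun N : ℕ => log N) atTop atTop :=
    tendsto_log_atTop.comp tendsto_natCast_atTop_atTop
  refine tendsto_atTop_mono' atTop ?_ tendsto_natCast_atTop_atTop
  filter_upwards [hratio.eventually (gt_mem_nhds one_pos), hlog.eventually_gt_atTop 0,
    eventually_ge_atTop 1] with N hlt hlogN hN
  have hN' : (1 : ℝ) ≤ N := by exact_mod_cast hN
  have := hMpos N
  rw [div_lt_one (by positivity)] at hlt
  nlinarith

noncomputable def criticalShift (M : ℕ → ℝ) (t : ℝ) (N : ℕ) : ℝ :=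
  t / √(4 * M N * N * log N)

lemma tendsto_criticalShift (hA : Tendsto (fun N : ℕ => M N * N * log N) atTop atTop) (t : ℝ) :
    Tendsto (criticalShift M t) atTop (𝓝 0) :=
  tendsto_const_nhds.div_atTop (tendsto_sqrt_atTop.comp (hA.const_mul_atTop four_pos)
    |>.congr fun N => by simp only [Function.comp_apply, mul_assoc])

lemma tendsto_couplingGap_criticalShift_mul
    (hA : Tendsto (fun N : ℕ => M N * N * log N) atTop atTop) (t : ℝ) :
    Tendsto (fun N => couplingGap (betac - criticalShift M t N) * (M N * N * log N)) atTop
      (𝓝 (2 * t ^ 2)) := by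
  have hδA : ∀ᶠ N in atTop, t ^ 2 / 4 = criticalShift M t N ^ 2 * (M N * N * log N) := by
    filter_upwards [hA.eventually_gt_atTop 0] with N hN
    rw [criticalShift, div_pow, sq_sqrt (by linarith),
      show 4 * M N * N * log N = 4 * (M N * N * log N) by ring, div_mul_eq_mul_div,
      mul_div_mul_right _ _ hN.ne']
  have h := tendsto_couplingGap_mul (tendsto_criticalShift hA t) (tendsto_const_nhds.congr' hδA)
  rwa [show 8 * (t ^ 2 / 4) = 2 * t ^ 2 by ring] at h

lemma tendsto_couplingGap_criticalShift
    (hA : Tendsto (fun N : ℕ => M N * N * log N) atTop atTop) (t : ℝ) :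
    Tendsto (fun N => couplingGap (betac - criticalShift M t N)) atTop (𝓝 0) := by
  have hδ := tendsto_criticalShift hA t
  simpa using tendsto_couplingGap_mul hδ (A := fun _ => 1) (a := 0) (by simpa using hδ.pow 2)

lemma tendsto_two_mul_couplingGap_mul_critWeightSum
    (hA : Tendsto (fun N : ℕ => M N * N * log N) atTop atTop) (t : ℝ) :
    Tendsto (fun N => 2 * M N * (couplingGap (betac - criticalShift M t N) * critWeightSum N))
      atTop (𝓝 (4 * t ^ 2 / π)) := by
  rw [show 4 * t ^ 2 / π = 2 * (2 * t ^ 2 * π⁻¹) by ring]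
  refine (((tendsto_couplingGap_criticalShift_mul hA t).mul
    tendsto_critWeightSum_div).const_mul 2).congr' ?_
  filter_upwards [eventually_gt_atTop 1] with N hN
  have hN' : (1 : ℝ) < N := by exact_mod_cast hN
  have := (log_pos hN').ne'
  have : (N : ℝ) ≠ 0 := by positivity
  field_simp

lemma tendsto_couplingGap_criticalShift_mul_sq (hMpos : ∀ N, 0 < M N)
    (hratio : Tendsto (fun N : ℕ => (N : ℝ) / (M N * log N)) atTop (𝓝 0))
    (hA : Tendsto (fun N : ℕ => M N * N * log N) atTop atTop) (t : ℝ) :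
    Tendsto (fun N : ℕ => couplingGap (betac - criticalShift M t N)
      * (6 + couplingGap (betac - criticalShift M t N)) * N ^ 2) atTop (𝓝 0) := by
  have h := ((tendsto_couplingGap_criticalShift_mul hA t).mul
    ((tendsto_couplingGap_criticalShift hA t).const_add 6)).mul hratio
  rw [mul_zero] at h
  refine h.congr' ?_
  filter_upwards [eventually_gt_atTop 1] with N hN
  have hN' : (1 : ℝ) < N := by exact_mod_cast hN
  have := (log_pos hN').ne'
  have := (hMpos N).ne'
  field_simp

end Asymptotics

theorem stmt16_general (M : ℕ → ℝ) (hMpos : ∀ N, 0 < M N)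
    (hM : Tendsto (fun N : ℕ =>
        (N : ℝ) * (Real.log (Real.log N)) ^ 2 / (M N * Real.log N)) atTop (nhds 0))
    (γ : ℝ → ℝ → ℝ)
    (hγ : ∀ β > (0 : ℝ), ∀ θ ∈ Set.Ioc 0 Real.pi,
      0 ≤ γ β θ ∧ Real.cosh (γ β θ) = coth (2 * β) * Real.cosh (2 * β) - Real.cos θ)
    (t : ℝ) :
    Tendsto (fun N : ℕ =>
        2 * M N * (∑ n ∈ Finset.Icc 1 N,
            γ (betac - t / Real.sqrt (4 * M N * N * Real.log N))
              (Real.pi * (2 * (n : ℝ) - 1) / (2 * N)))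
          - 2 * M N * (∑ n ∈ Finset.Icc 1 N,
            γ betac (Real.pi * (2 * (n : ℝ) - 1) / (2 * N))))
      atTop (nhds (4 * t ^ 2 / Real.pi)) := by
  have hratio := tendsto_div_mul_log_of_tendsto_loglog hMpos hM
  have hA := tendsto_mul_mul_log_atTop hMpos hratio
  have hupper := tendsto_two_mul_couplingGap_mul_critWeightSum hA t
  have hη := ((tendsto_couplingGap_criticalShift_mul_sq hMpos hratio hA t).const_add 1).sqrt
  rw [add_zero, sqrt_one] at hη
  have hlower := hupper.div hη one_ne_zero
  rw [div_one] at hlower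
  have hβ : ∀ᶠ N in atTop, 0 < betac - criticalShift M t N :=
    (tendsto_const_nhds.sub (tendsto_criticalShift hA t)).eventually_const_lt
      (by simpa using betac_pos)
  refine tendsto_of_tendsto_of_tendsto_of_le_of_le' hlower hupper ?_ ?_ <;>
    filter_upwards [hβ] with N hN <;>
    have hsum := IsOnsagerGamma.sum_sub_betac_mem_Icc hγ hN N <;>
    rw [← mul_sub, ← sum_sub_distrib]
  · rw [Pi.div_apply, mul_div_assoc]
    exact mul_le_mul_of_nonneg_left hsum.1 (by linarith [hMpos N])
  · exact mul_le_mul_of_nonneg_left hsum.2 (by linarith [hMpos N])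

/-- Suppose `M : ℕ → (0,∞)` satisfies `N(ln ln N)²/(M(N)·ln N) → 0`, and let
`L3(β) = 2M(N) ∑_{n=1}^{N} γ_{θ_n}(β)` where `θ_n = π(2n−1)/(2N)` and `γ_θ(β)` is the
unique `γ ≥ 0` with `cosh γ = coth(2β)cosh(2β) − cos θ`. Then for each fixed `t ≥ 0`,
`L3(β_c − t/√(4M(N)N ln N)) − L3(β_c) → 4t²/π` as `N → ∞`. -/
theorem stmt16 (M : ℕ → ℝ) (hMpos : ∀ N, 0 < M N)
    (hM : Tendsto (fun N : ℕ =>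
        (N : ℝ) * (Real.log (Real.log N)) ^ 2 / (M N * Real.log N)) atTop (nhds 0))
    (γ : ℝ → ℝ → ℝ)
    (hγ : ∀ β > (0 : ℝ), ∀ θ ∈ Set.Ioc 0 Real.pi,
      0 ≤ γ β θ ∧ Real.cosh (γ β θ) = coth (2 * β) * Real.cosh (2 * β) - Real.cos θ)
    (t : ℝ) (ht : 0 ≤ t) :
    Tendsto (fun N : ℕ =>
        2 * M N * (∑ n ∈ Finset.Icc 1 N,
            γ (betac - t / Real.sqrt (4 * M N * N * Real.log N))
              (Real.pi * (2 * (n : ℝ) - 1) / (2 * N)))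
          - 2 * M N * (∑ n ∈ Finset.Icc 1 N,
            γ betac (Real.pi * (2 * (n : ℝ) - 1) / (2 * N))))
      atTop (nhds (4 * t ^ 2 / Real.pi)) :=
  stmt16_general M hMpos hM γ hγ t
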